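/- arXiv:2310.04476 — 8 statements merged into one kernel-verified Lean document; each statement's English description precedes it below -/
import Mathlib

section
/- For every integer m ≥ 2, the strong transitivity of the complete bipartite graph K_{m,m-1} equals 2, i.e., Tr_st(K_{m,m-1}) = 2. -/
namespace StrongTrans

variable {V : Type*}

/-- The degree of a vertex (number of neighbours). -/
noncomputable def deg (G : SimpleGraph V) (v : V) : ℕ := Nat.card {w // G.Adj v w}

/-- `A` dominates `B`: every vertex of `B` has a neighbour in `A`. -/
def Dominates (G : SimpleGraph V) (A B : Set V) : Prop :=
  ∀ y ∈ B, ∃ x ∈ A, G.Adj x y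

/-- `A` strongly dominates `B`: every vertex `y ∈ B` has a neighbour `x ∈ A`
with `deg x ≥ deg y`. -/
def StronglyDominates (G : SimpleGraph V) (A B : Set V) : Prop :=
  ∀ y ∈ B, ∃ x ∈ A, G.Adj x y ∧ deg G y ≤ deg G x

/-- A transitive partition of `G` into `k` nonempty parts `P 0, …, P (k-1)`:
the parts are pairwise disjoint, cover `V`, and earlier parts dominate later ones. -/
structure IsTransitivePartition (G : SimpleGraph V) {k : ℕ} (P : Fin k → Set V) : Prop where
  nonempty : ∀ i, (P i).Nonempty
  pairwiseDisjoint : ∀ i j, i ≠ j → Disjoint (P i) (P j)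
  covers : ∀ v, ∃ i, v ∈ P i
  dominates : ∀ i j, i < j → Dominates G (P i) (P j)

/-- A strong transitive partition of `G` into `k` nonempty parts:
earlier parts strongly dominate later ones. -/
structure IsStrongTransitivePartition (G : SimpleGraph V) {k : ℕ} (P : Fin k → Set V) : Prop where
  nonempty : ∀ i, (P i).Nonempty
  pairwiseDisjoint : ∀ i j, i ≠ j → Disjoint (P i) (P j)
  covers : ∀ v, ∃ i, v ∈ P i
  stronglyDominates : ∀ i j, i < j → StronglyDominates G (P i) (P j)

/-- The transitivity `Tr(G)`: maximum size of a transitive partition. -/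
noncomputable def transitivity (G : SimpleGraph V) : ℕ :=
  sSup {k | ∃ P : Fin k → Set V, IsTransitivePartition G P}

/-- The strong transitivity `Tr_st(G)`: maximum size of a strong transitive partition. -/
noncomputable def strongTransitivity (G : SimpleGraph V) : ℕ :=
  sSup {k | ∃ P : Fin k → Set V, IsStrongTransitivePartition G P}


def rightEquiv (α β : Type*) : {x : α ⊕ β // x.isRight} ≃ β where
  toFun x := x.1.getRight x.2
  invFun b := ⟨Sum.inr b, rfl⟩
  left_inv := by rintro ⟨(a|b), h⟩ <;> simp at h ⊢
  right_inv b := rfl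

def leftEquiv (α β : Type*) : {x : α ⊕ β // x.isLeft} ≃ α where
  toFun x := x.1.getLeft x.2
  invFun a := ⟨Sum.inl a, rfl⟩
  left_inv := by rintro ⟨(a|b), h⟩ <;> simp at h ⊢
  right_inv a := rfl

lemma deg_inl (α β : Type*) (a : α) :
    deg (completeBipartiteGraph α β) (Sum.inl a) = Nat.card β := by
  unfold deg
  rw [Nat.card_congr ((Equiv.subtypeEquivRight (fun w => by simp)).trans (rightEquiv α β))]

lemma deg_inr (α β : Type*) (b : β) :
    deg (completeBipartiteGraph α β) (Sum.inr b) = Nat.card α := by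
  unfold deg
  rw [Nat.card_congr ((Equiv.subtypeEquivRight (fun w => by simp)).trans (leftEquiv α β))]

/-- for every `m ≥ 2`, `Tr_st(K_{m,m-1}) = 2`. -/
theorem strongTransitivity_completeBipartiteGraph (m : ℕ) (hm : 2 ≤ m) :
    strongTransitivity (completeBipartiteGraph (Fin m) (Fin (m - 1))) = 2 := by
  set G := completeBipartiteGraph (Fin m) (Fin (m - 1)) with hG
  have hdl : ∀ a : Fin m, deg G (Sum.inl a) = m - 1 := fun a => by
    rw [hG, deg_inl]; simp
  have hdr : ∀ b : Fin (m - 1), deg G (Sum.inr b) = m := fun b => by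
    rw [hG, deg_inr]; simp
  have hbound : ∀ k, (∃ P : Fin k → Set (Fin m ⊕ Fin (m - 1)),
      IsStrongTransitivePartition G P) → k ≤ 2 := by
    rintro k ⟨P, hP⟩
    by_contra hk
    push_neg at hk
    have h3 : 3 ≤ k := hk
    -- every vertex in a part with index > 0 is a left vertex
    have hleft : ∀ (j : Fin k), (⟨0, by omega⟩ : Fin k) < j → ∀ y ∈ P j, y.isLeft := by
      intro j hj y hy
      obtain ⟨x, _, hadj, hdeg⟩ := hP.stronglyDominates ⟨0, by omega⟩ j hj y hy
      cases y with
      | inl a => rfl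
      | inr b =>
        exfalso
        cases x with
        | inl a =>
          rw [hdl, hdr] at hdeg
          omega
        | inr b' => simp [hG] at hadj
    have h0k : (0 : ℕ) < k := by omega
    have h1k : (1 : ℕ) < k := by omega
    have h2k : (2 : ℕ) < k := by omega
    set i1 : Fin k := ⟨1, h1k⟩
    set i2 : Fin k := ⟨2, h2k⟩
    obtain ⟨y, hy⟩ := hP.nonempty i2
    obtain ⟨x, hx, hadj, -⟩ := hP.stronglyDominates i1 i2 (by simp [i1, i2]) y hy
    have hyl := hleft i2 (by simp [i2, Fin.lt_def]) y hy
    have hxl := hleft i1 (by simp [i1, Fin.lt_def]) x hx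
    cases y with
    | inr b => simp at hyl
    | inl a =>
      cases x with
      | inr b => simp at hxl
      | inl a' => simp [hG] at hadj
  have hmem : ∃ P : Fin 2 → Set (Fin m ⊕ Fin (m - 1)),
      IsStrongTransitivePartition G P := by
    refine ⟨fun i => if i = 0 then {v | v.isRight} else {v | v.isLeft}, ?_, ?_, ?_, ?_⟩
    · intro i
      by_cases h : i = 0
      · exact ⟨Sum.inr ⟨0, by omega⟩, by simp [h]⟩
      · exact ⟨Sum.inl ⟨0, by omega⟩, by simp [h]⟩
    · intro i j hij
      rw [Set.disjoint_left]
      intro v hv hv'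
      by_cases h : i = 0 <;> by_cases h' : j = 0 <;>
        first | omega | (simp_all [Set.mem_setOf_eq]; cases v <;> simp_all)
    · intro v
      cases v with
      | inl a => exact ⟨1, by simp⟩
      | inr b => exact ⟨0, by simp⟩
    · intro i j hij y hy
      have hi : i = 0 := by omega
      have hj : j = 1 := by omega
      subst hi hj
      simp only [if_pos rfl] at *
      cases y with
      | inr b => simp at hy
      | inl a =>
        refine ⟨Sum.inr ⟨0, by omega⟩, by simp, Or.inr ⟨rfl, rfl⟩, ?_⟩
        rw [hdl, hdr]; omega
  refine le_antisymm (csSup_le ⟨2, hmem⟩ hbound) (le_csSup ⟨2, hbound⟩ hmem)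

end StrongTrans
end

section
/- The difference between transitivity and strong transitivity can be arbitrarily large: for every natural number N there exists a finite simple graph G with Tr(G) − Tr_st(G) ≥ N. -/
namespace StrongTrans

variable {V : Type*}

/-!
In `K_{N+2,N+1}` every vertex of the small side has degree `N + 2`, more than each of its
neighbours, so it has no strong dominator and lies in the first part of any strong transitive
partition; a third part would then contain a vertex of the large side, whose neighbours all lie
in the first part, so `Tr_st ≤ 2`. Pairing the `i`-th vertices of the two sides, with the
leftover vertex of the large side as the last part, gives a transitive partition of size `N + 2`.
-/

section Partitions

variable {G : SimpleGraph V} {k : ℕ}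

theorem IsTransitivePartition.le_card [Finite V] {P : Fin k → Set V}
    (hP : IsTransitivePartition G P) : k ≤ Nat.card V := by
  choose f hf using hP.nonempty
  have hf_inj : Function.Injective f := fun i j hij => by
    by_contra hne
    exact Set.disjoint_left.mp (hP.pairwiseDisjoint i j hne) (hf i) (hij ▸ hf j)
  simpa using Nat.card_le_card_of_injective f hf_inj

theorem le_transitivity [Finite V] {P : Fin k → Set V} (hP : IsTransitivePartition G P) :
    k ≤ transitivity G :=
  le_csSup ⟨Nat.card V, fun _ ⟨_, hQ⟩ => hQ.le_card⟩ ⟨P, hP⟩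

theorem isTransitivePartition_fibers {f : V → Fin k} (hf : Function.Surjective f)
    (hdom : ∀ v, ∀ i < f v, ∃ w, f w = i ∧ G.Adj w v) :
    IsTransitivePartition G (fun i => f ⁻¹' {i}) where
  nonempty i := hf i
  pairwiseDisjoint _ _ hij := (Set.disjoint_singleton.2 hij).preimage f
  covers v := ⟨f v, rfl⟩
  dominates i _ hij v hv := hdom v i (hv ▸ hij)

theorem IsStrongTransitivePartition.val_eq_zero_of_deg_lt {P : Fin k → Set V}
    (hP : IsStrongTransitivePartition G P) {v : V} (hv : ∀ w, G.Adj w v → deg G w < deg G v)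
    {i : Fin k} (hvi : v ∈ P i) : i.val = 0 := by
  by_contra hi
  obtain ⟨w, -, hwv, hdeg⟩ := hP.stronglyDominates ⟨0, by omega⟩ i (Nat.pos_of_ne_zero hi) v hvi
  exact (hv w hwv).not_ge hdeg

theorem strongTransitivity_le_two (B : Set V)
    (hB_deg : ∀ v ∈ B, ∀ w, G.Adj w v → deg G w < deg G v)
    (hB_cover : ∀ v w, G.Adj v w → v ∈ B ∨ w ∈ B) :
    strongTransitivity G ≤ 2 := by
  refine csSup_le' ?_
  rintro k ⟨P, hP⟩
  by_contra! hk
  have mem_B : ∀ v ∈ B, ∀ i, v ∈ P i → i.val = 0 := fun v hv _ =>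
    hP.val_eq_zero_of_deg_lt (hB_deg v hv)
  obtain ⟨y, hy⟩ := hP.nonempty ⟨2, hk⟩
  obtain ⟨x, hx, hxy, -⟩ :=
    hP.stronglyDominates ⟨1, by omega⟩ ⟨2, hk⟩ (by simp [Fin.lt_def]) y hy
  rcases hB_cover x y hxy with hxB | hyB
  · exact absurd (mem_B x hxB _ hx) one_ne_zero
  · exact absurd (mem_B y hyB _ hy) two_ne_zero

end Partitions

/-- `K_{p,q}`, with sides `{v | v < p}` and `{v | p ≤ v}`. -/
def finCompleteBipartite (p q : ℕ) : SimpleGraph (Fin (p + q)) where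
  Adj x y := (x.val < p) ≠ (y.val < p)
  symm := ⟨fun _ _ => Ne.symm⟩
  loopless := ⟨fun _ h => h rfl⟩

section FinCompleteBipartite

variable {p q : ℕ}

theorem finCompleteBipartite_adj {x y : Fin (p + q)} :
    (finCompleteBipartite p q).Adj x y ↔ (x.val < p ↔ ¬ y.val < p) := by
  simp only [finCompleteBipartite, ne_eq, eq_iff_iff]
  tauto

theorem deg_finCompleteBipartite (x : Fin (p + q)) :
    deg (finCompleteBipartite p q) x = if x.val < p then q else p := by
  have card_left : Nat.card {w : Fin (p + q) // w.val < p} = p := by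
    rw [Nat.card_eq_fintype_card, Fintype.card_fin_lt_of_le (Nat.le_add_right p q)]
  have card_right : Nat.card {w : Fin (p + q) // ¬ w.val < p} = q := by
    rw [Nat.card_eq_fintype_card, Fintype.card_subtype_compl, Fintype.card_fin,
      ← Nat.card_eq_fintype_card, card_left, Nat.add_sub_cancel_left]
  unfold deg
  split_ifs with hx
  · exact (Nat.card_congr (Equiv.subtypeEquivRight fun w => by
      simp [finCompleteBipartite_adj, hx])).trans card_right
  · exact (Nat.card_congr (Equiv.subtypeEquivRight fun w => by
      simp [finCompleteBipartite_adj, hx])).trans card_left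

theorem strongTransitivity_finCompleteBipartite_le (hqp : q < p) :
    strongTransitivity (finCompleteBipartite p q) ≤ 2 := by
  refine strongTransitivity_le_two {v | ¬ v.val < p} (fun v hv w hwv => ?_) (fun v w hvw => ?_)
  · have hv : ¬ v.val < p := hv
    have hw : w.val < p := by simpa [finCompleteBipartite_adj, hv] using hwv
    rwa [deg_finCompleteBipartite, deg_finCompleteBipartite, if_pos hw, if_neg hv]
  · by_cases hv : v.val < p
    · exact Or.inr (finCompleteBipartite_adj.1 hvw |>.1 hv)
    · exact Or.inl hv

/-- Part `i < q` is `{i, p + i}`; the remaining vertices `q, …, p - 1` of the left side form the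
last part `q`. -/
theorem succ_le_transitivity_finCompleteBipartite (hqp : q < p) :
    q + 1 ≤ transitivity (finCompleteBipartite p q) := by
  let f : Fin (p + q) → Fin (q + 1) := fun v =>
    if v.val < p then ⟨min v.val q, by omega⟩ else ⟨v.val - p, by omega⟩
  refine le_transitivity (isTransitivePartition_fibers (f := f) (fun i => ?_) fun v i hi => ?_)
  · have hip : i.val < p := by omega
    exact ⟨⟨i.val, by omega⟩, Fin.ext (by simp [f, hip]; omega)⟩
  by_cases hv : v.val < p
  · have hiq : i.val < q := by simp only [f, hv, if_true, Fin.lt_def] at hi; omega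
    refine ⟨⟨p + i.val, by omega⟩, Fin.ext ?_, ?_⟩
    · simp [f]
    · simp [finCompleteBipartite_adj, hv]
  · have hiv : i.val < v.val - p := by simpa [f, hv, Fin.lt_def] using hi
    have hip : i.val < p := by omega
    refine ⟨⟨i.val, by omega⟩, Fin.ext ?_, ?_⟩
    · simp [f, hip]; omega
    · simp [finCompleteBipartite_adj, hv, hip]

end FinCompleteBipartite

/-- the gap `Tr(G) - Tr_st(G)` can be arbitrarily large: for every `N`
there is a finite simple graph `G` with `Tr(G) - Tr_st(G) ≥ N`. -/
theorem transitivity_sub_strongTransitivity_unbounded (N : ℕ) :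
    ∃ (n : ℕ) (G : SimpleGraph (Fin n)),
      strongTransitivity G + N ≤ transitivity G :=
  ⟨_, finCompleteBipartite (N + 2) (N + 1), by
    have h_strong := strongTransitivity_finCompleteBipartite_le (by omega : N + 1 < N + 2)
    have h_trans := succ_le_transitivity_finCompleteBipartite (by omega : N + 1 < N + 2)
    omega⟩

end StrongTrans
end

section
/- Strong transitivity is not monotone under subgraphs: there exist finite simple graphs H and G such that H is a subgraph of G (on the same or a subset of vertices, with edge set contained in that of G) and Tr_st(H) > Tr_st(G). In particular, C_4 is a subgraph of K_{3,2}, Tr_st(C_4) = 3, and Tr_st(K_{3,2}) = 2. -/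
namespace StrongTrans

variable {V : Type*}

section Aux

instance : DecidableRel (completeBipartiteGraph (Fin 3) (Fin 2)).Adj :=
  fun v w => by unfold completeBipartiteGraph; exact inferInstanceAs (Decidable (_ ∨ _))

lemma degC4 : ∀ v, deg (SimpleGraph.cycleGraph 4) v = 2 := by
  unfold deg
  simp only [Nat.card_eq_fintype_card]
  decide

/-- computable degree function on `K_{3,2}`. -/
def degK' : Fin 3 ⊕ Fin 2 → ℕ
  | .inl _ => 2
  | .inr _ => 3

lemma degK : ∀ v, deg (completeBipartiteGraph (Fin 3) (Fin 2)) v = degK' v := by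
  unfold deg degK'
  simp only [Nat.card_eq_fintype_card]
  decide

/-- the fibers of a surjection onto `Fin k` satisfying the domination condition
form a strong transitive partition. -/
lemma fiber_partition {k : ℕ} (G : SimpleGraph V) (f : V → Fin k)
    (hsurj : Function.Surjective f)
    (hdom : ∀ i j : Fin k, i < j → ∀ y, f y = j →
      ∃ x, f x = i ∧ G.Adj x y ∧ deg G y ≤ deg G x) :
    IsStrongTransitivePartition G (fun i => f ⁻¹' {i}) := by
  constructor
  · intro i; obtain ⟨v, hv⟩ := hsurj i; exact ⟨v, hv⟩
  · intro i j hij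
    exact Set.disjoint_left.mpr fun a ha hb => hij (ha.symm.trans hb)
  · intro v; exact ⟨f v, rfl⟩
  · intro i j hij y hy
    obtain ⟨x, hx, hadj, hdeg⟩ := hdom i j hij y hy
    exact ⟨x, hx, hadj, hdeg⟩

lemma three_mem_C4 :
    ∃ P : Fin 3 → Set (Fin 4),
      IsStrongTransitivePartition (SimpleGraph.cycleGraph 4) P := by
  refine ⟨fun i => (![0, 1, 2, 0] : Fin 4 → Fin 3) ⁻¹' {i},
    fiber_partition _ _ (by decide) ?_⟩
  simp only [degC4]
  decide

lemma two_mem_K :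
    ∃ P : Fin 2 → Set (Fin 3 ⊕ Fin 2),
      IsStrongTransitivePartition (completeBipartiteGraph (Fin 3) (Fin 2)) P := by
  refine ⟨fun i => (Sum.elim (fun _ => 1) (fun _ => 0) : Fin 3 ⊕ Fin 2 → Fin 2) ⁻¹' {i},
    fiber_partition _ _ ?_ ?_⟩
  · intro i
    fin_cases i
    exacts [⟨Sum.inr 0, rfl⟩, ⟨Sum.inl 0, rfl⟩]
  · simp only [degK]
    decide

lemma C4_upper {k : ℕ} (P : Fin k → Set (Fin 4))
    (h : IsStrongTransitivePartition (SimpleGraph.cycleGraph 4) P) : k ≤ 3 := by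
  by_contra hk
  push_neg at hk
  have h4 : 4 ≤ k := hk
  set i0 : Fin k := ⟨0, by omega⟩
  set i1 : Fin k := ⟨1, by omega⟩
  set i2 : Fin k := ⟨2, by omega⟩
  set i3 : Fin k := ⟨3, by omega⟩
  obtain ⟨y, hy⟩ := h.nonempty i3
  obtain ⟨x0, hx0, hadj0, -⟩ :=
    h.stronglyDominates i0 i3 (by simp [i0, i3, Fin.lt_def]) y hy
  obtain ⟨x1, hx1, hadj1, -⟩ :=
    h.stronglyDominates i1 i3 (by simp [i1, i3, Fin.lt_def]) y hy
  obtain ⟨x2, hx2, hadj2, -⟩ :=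
    h.stronglyDominates i2 i3 (by simp [i2, i3, Fin.lt_def]) y hy
  have hne01 : x0 ≠ x1 := fun he =>
    (Set.disjoint_left.mp (h.pairwiseDisjoint i0 i1 (by simp [i0, i1, Fin.ext_iff])) hx0)
      (he ▸ hx1)
  have hne02 : x0 ≠ x2 := fun he =>
    (Set.disjoint_left.mp (h.pairwiseDisjoint i0 i2 (by simp [i0, i2, Fin.ext_iff])) hx0)
      (he ▸ hx2)
  have hne12 : x1 ≠ x2 := fun he =>
    (Set.disjoint_left.mp (h.pairwiseDisjoint i1 i2 (by simp [i1, i2, Fin.ext_iff])) hx1)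
      (he ▸ hx2)
  have hcard : Nat.card {w // (SimpleGraph.cycleGraph 4).Adj y w} = 2 := degC4 y
  rw [Nat.card_eq_fintype_card] at hcard
  have h3lt : 2 < Fintype.card {w // (SimpleGraph.cycleGraph 4).Adj y w} := by
    rw [Fintype.two_lt_card_iff]
    exact ⟨⟨x0, hadj0.symm⟩, ⟨x1, hadj1.symm⟩, ⟨x2, hadj2.symm⟩,
      fun he => hne01 (congrArg Subtype.val he),
      fun he => hne02 (congrArg Subtype.val he),
      fun he => hne12 (congrArg Subtype.val he)⟩
  omega

lemma K_upper {k : ℕ} (P : Fin k → Set (Fin 3 ⊕ Fin 2))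
    (h : IsStrongTransitivePartition (completeBipartiteGraph (Fin 3) (Fin 2)) P) :
    k ≤ 2 := by
  by_contra hk
  push_neg at hk
  have h3 : 3 ≤ k := hk
  set i0 : Fin k := ⟨0, by omega⟩
  set i1 : Fin k := ⟨1, by omega⟩
  set i2 : Fin k := ⟨2, by omega⟩
  -- every right-side vertex must lie in the first part
  have hinr : ∀ b : Fin 2, Sum.inr b ∈ P i0 := by
    intro b
    obtain ⟨j, hj⟩ := h.covers (Sum.inr b)
    rcases eq_or_ne j i0 with rfl | hne
    · exact hj
    · exfalso
      have hlt : i0 < j := by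
        have : (0 : ℕ) < j.val := by
          rcases Nat.eq_zero_or_pos j.val with h0 | h0
          · exact absurd (Fin.ext h0 : j = i0) hne
          · exact h0
        simpa [i0, Fin.lt_def] using this
      obtain ⟨x, -, hadj, hdeg⟩ := h.stronglyDominates i0 j hlt _ hj
      rw [degK, degK] at hdeg
      rcases x with a | b'
      · simp [degK'] at hdeg
      · simp [completeBipartiteGraph] at hadj
  obtain ⟨y, hy⟩ := h.nonempty i2
  obtain ⟨a, rfl⟩ : ∃ a, y = Sum.inl a := by
    rcases y with a | b
    · exact ⟨a, rfl⟩
    · exact absurd hy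
        (Set.disjoint_left.mp (h.pairwiseDisjoint i0 i2 (by simp [i0, i2, Fin.ext_iff]))
          (hinr b))
  obtain ⟨x, hx, hadj, -⟩ :=
    h.stronglyDominates i1 i2 (by simp [i1, i2, Fin.lt_def]) _ hy
  obtain ⟨b, rfl⟩ : ∃ b, x = Sum.inr b := by
    rcases x with a' | b
    · simp [completeBipartiteGraph] at hadj
    · exact ⟨b, rfl⟩
  exact Set.disjoint_left.mp (h.pairwiseDisjoint i0 i1 (by simp [i0, i1, Fin.ext_iff]))
    (hinr b) hx

end Aux

/-- strong transitivity is not monotone under subgraphs: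
`C₄` is a subgraph of `K_{3,2}` (there is an injection of the vertices of `C₄`
into those of `K_{3,2}` carrying edges to edges), `Tr_st(C₄) = 3`,
`Tr_st(K_{3,2}) = 2`, and hence `Tr_st(K_{3,2}) < Tr_st(C₄)`. -/
theorem strongTransitivity_not_subgraph_monotone :
    (∃ f : Fin 4 ↪ (Fin 3 ⊕ Fin 2), ∀ a b : Fin 4,
      (SimpleGraph.cycleGraph 4).Adj a b →
        (completeBipartiteGraph (Fin 3) (Fin 2)).Adj (f a) (f b)) ∧
    strongTransitivity (SimpleGraph.cycleGraph 4) = 3 ∧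
    strongTransitivity (completeBipartiteGraph (Fin 3) (Fin 2)) = 2 ∧
    strongTransitivity (completeBipartiteGraph (Fin 3) (Fin 2)) <
      strongTransitivity (SimpleGraph.cycleGraph 4) := by
  have hC4 : strongTransitivity (SimpleGraph.cycleGraph 4) = 3 := by
    have h3 : 3 ∈ {k | ∃ P : Fin k → Set (Fin 4),
        IsStrongTransitivePartition (SimpleGraph.cycleGraph 4) P} := three_mem_C4
    have hbd : ∀ k ∈ {k | ∃ P : Fin k → Set (Fin 4),
        IsStrongTransitivePartition (SimpleGraph.cycleGraph 4) P}, k ≤ 3 := by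
      rintro k ⟨P, hP⟩
      exact C4_upper P hP
    exact le_antisymm (csSup_le ⟨3, h3⟩ hbd) (le_csSup ⟨3, hbd⟩ h3)
  have hK : strongTransitivity (completeBipartiteGraph (Fin 3) (Fin 2)) = 2 := by
    have h2 : 2 ∈ {k | ∃ P : Fin k → Set (Fin 3 ⊕ Fin 2),
        IsStrongTransitivePartition (completeBipartiteGraph (Fin 3) (Fin 2)) P} := two_mem_K
    have hbd : ∀ k ∈ {k | ∃ P : Fin k → Set (Fin 3 ⊕ Fin 2),
        IsStrongTransitivePartition (completeBipartiteGraph (Fin 3) (Fin 2)) P}, k ≤ 2 := by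
      rintro k ⟨P, hP⟩
      exact K_upper P hP
    exact le_antisymm (csSup_le ⟨2, h2⟩ hbd) (le_csSup ⟨2, hbd⟩ h2)
  refine ⟨⟨⟨![Sum.inl 0, Sum.inr 0, Sum.inl 1, Sum.inr 1], by decide⟩, by decide⟩,
    hC4, hK, by rw [hC4, hK]; omega⟩

end StrongTrans
end

section
/- For every integer n ≥ 6, the strong transitivity of the path P_n on n vertices equals 3, and it equals the transitivity: Tr_st(P_n) = Tr(P_n) = 3. -/
namespace StrongTrans

variable {V : Type*}

lemma strong_to_trans {G : SimpleGraph V} {k : ℕ} {P : Fin k → Set V}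
    (h : IsStrongTransitivePartition G P) : IsTransitivePartition G P where
  nonempty := h.nonempty
  pairwiseDisjoint := h.pairwiseDisjoint
  covers := h.covers
  dominates := fun i j hij y hy => by
    obtain ⟨x, hx, hadj, -⟩ := h.stronglyDominates i j hij y hy
    exact ⟨x, hx, hadj⟩

lemma deg_internal {n : ℕ} (v : Fin n) (h0 : 0 < v.val) (h1 : v.val + 1 < n) :
    deg (SimpleGraph.pathGraph n) v = 2 := by
  have hne : (⟨v.val - 1, by omega⟩ : Fin n) ≠ ⟨v.val + 1, h1⟩ := by
    simp only [Ne, Fin.mk.injEq]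
    omega
  have hset : {w : Fin n | (SimpleGraph.pathGraph n).Adj v w} =
      {⟨v.val - 1, by omega⟩, ⟨v.val + 1, h1⟩} := by
    ext w
    simp only [Set.mem_setOf_eq, SimpleGraph.pathGraph_adj, Set.mem_insert_iff,
      Set.mem_singleton_iff, Fin.ext_iff]
    omega
  have : deg (SimpleGraph.pathGraph n) v
      = ({w : Fin n | (SimpleGraph.pathGraph n).Adj v w} : Set (Fin n)).ncard := by
    rw [← Nat.card_coe_set_eq]; rfl
  rw [this, hset, Set.ncard_pair hne]

lemma trans_le_three {n : ℕ} {k : ℕ} {Q : Fin k → Set (Fin n)}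
    (hQ : IsTransitivePartition (SimpleGraph.pathGraph n) Q) : k ≤ 3 := by
  by_contra hk
  push_neg at hk
  set i0 : Fin k := ⟨0, by omega⟩
  set i1 : Fin k := ⟨1, by omega⟩
  set i2 : Fin k := ⟨2, by omega⟩
  set i3 : Fin k := ⟨3, by omega⟩
  obtain ⟨y, hy⟩ := hQ.nonempty i3
  obtain ⟨x0, hx0, ha0⟩ := hQ.dominates i0 i3 (by simp [i0, i3, Fin.lt_def]) y hy
  obtain ⟨x1, hx1, ha1⟩ := hQ.dominates i1 i3 (by simp [i1, i3, Fin.lt_def]) y hy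
  obtain ⟨x2, hx2, ha2⟩ := hQ.dominates i2 i3 (by simp [i2, i3, Fin.lt_def]) y hy
  have d01 : x0 ≠ x1 := fun he =>
    Set.disjoint_left.mp (hQ.pairwiseDisjoint i0 i1 (by simp [i0, i1, Fin.ext_iff]))
      hx0 (he ▸ hx1)
  have d02 : x0 ≠ x2 := fun he =>
    Set.disjoint_left.mp (hQ.pairwiseDisjoint i0 i2 (by simp [i0, i2, Fin.ext_iff]))
      hx0 (he ▸ hx2)
  have d12 : x1 ≠ x2 := fun he =>
    Set.disjoint_left.mp (hQ.pairwiseDisjoint i1 i2 (by simp [i1, i2, Fin.ext_iff]))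
      hx1 (he ▸ hx2)
  rw [SimpleGraph.pathGraph_adj] at ha0 ha1 ha2
  rw [Ne, Fin.ext_iff] at d01 d02 d12
  omega

lemma strong3 (G : SimpleGraph V) (a b : V) (hab : a ≠ b)
    (hne : (({a, b} : Set V)ᶜ).Nonempty)
    (h1 : ∃ x ∈ ({a, b} : Set V)ᶜ, G.Adj x b ∧ deg G b ≤ deg G x)
    (h2 : ∃ x ∈ ({a, b} : Set V)ᶜ, G.Adj x a ∧ deg G a ≤ deg G x)
    (h3 : G.Adj b a ∧ deg G a ≤ deg G b) :
    IsStrongTransitivePartition G ![({a, b} : Set V)ᶜ, {b}, {a}] := by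
  constructor
  · intro i
    fin_cases i
    · exact hne
    · exact ⟨b, rfl⟩
    · exact ⟨a, rfl⟩
  · intro i j hij
    fin_cases i <;> fin_cases j <;> simp_all [Set.disjoint_left] <;> tauto
  · intro v
    by_cases hva : v = a
    · exact ⟨2, by simp [hva]⟩
    by_cases hvb : v = b
    · exact ⟨1, by simp [hvb]⟩
    · exact ⟨0, by simp [hva, hvb]⟩
  · intro i j hij y hy
    fin_cases i <;> fin_cases j <;> simp_all

/-- for every `n ≥ 6`, `Tr_st(P_n) = Tr(P_n) = 3`. -/
theorem strongTransitivity_pathGraph (n : ℕ) (hn : 6 ≤ n) :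
    strongTransitivity (SimpleGraph.pathGraph n) = 3 ∧
    transitivity (SimpleGraph.pathGraph n) = 3 := by
  have h2n : 2 < n := by omega
  have h3n : 3 < n := by omega
  have h4n : 4 < n := by omega
  have h1n : 1 < n := by omega
  have h0n : 0 < n := by omega
  set a : Fin n := ⟨2, h2n⟩ with ha
  set b : Fin n := ⟨3, h3n⟩ with hb
  set c : Fin n := ⟨4, h4n⟩ with hc
  set e : Fin n := ⟨1, h1n⟩ with he
  have hda : deg (SimpleGraph.pathGraph n) a = 2 :=
    deg_internal a (by norm_num [ha]) (by show 2 + 1 < n; omega)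
  have hdb : deg (SimpleGraph.pathGraph n) b = 2 :=
    deg_internal b (by norm_num [hb]) (by show 3 + 1 < n; omega)
  have hdc : deg (SimpleGraph.pathGraph n) c = 2 :=
    deg_internal c (by norm_num [hc]) (by show 4 + 1 < n; omega)
  have hde : deg (SimpleGraph.pathGraph n) e = 2 :=
    deg_internal e (by norm_num [he]) (by show 1 + 1 < n; omega)
  have hab : a ≠ b := by simp [ha, hb, Fin.ext_iff]
  have hstrong : IsStrongTransitivePartition (SimpleGraph.pathGraph n)
      ![({a, b} : Set (Fin n))ᶜ, {b}, {a}] := by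
    apply strong3 (SimpleGraph.pathGraph n) a b hab
    · exact ⟨c, by simp [ha, hb, hc, Fin.ext_iff]⟩
    · refine ⟨c, by simp [ha, hb, hc, Fin.ext_iff], ?_, ?_⟩
      · exact SimpleGraph.pathGraph_adj.mpr (Or.inr rfl)
      · rw [hdb, hdc]
    · refine ⟨e, by simp [ha, hb, he, Fin.ext_iff], ?_, ?_⟩
      · exact SimpleGraph.pathGraph_adj.mpr (Or.inl rfl)
      · rw [hda, hde]
    · exact ⟨SimpleGraph.pathGraph_adj.mpr (Or.inr rfl), by rw [hda, hdb]⟩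
  have htrans := strong_to_trans hstrong
  have hubS : ∀ m ∈ {m | ∃ Q : Fin m → Set (Fin n),
      IsStrongTransitivePartition (SimpleGraph.pathGraph n) Q}, m ≤ 3 := by
    rintro m ⟨Q, hQ⟩
    exact trans_le_three (strong_to_trans hQ)
  have hubT : ∀ m ∈ {m | ∃ Q : Fin m → Set (Fin n),
      IsTransitivePartition (SimpleGraph.pathGraph n) Q}, m ≤ 3 := by
    rintro m ⟨Q, hQ⟩
    exact trans_le_three hQ
  constructor
  · exact le_antisymm (csSup_le ⟨3, _, hstrong⟩ hubS) (le_csSup ⟨3, hubS⟩ ⟨_, hstrong⟩)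
  · exact le_antisymm (csSup_le ⟨3, _, htrans⟩ hubT) (le_csSup ⟨3, hubT⟩ ⟨_, htrans⟩)

end StrongTrans
end

section
/- Let G be a split graph whose vertex set is partitioned into an independent set S and a clique K, and assume K is a maximum clique of G, i.e., |K| = ω(G), where ω(G) is the clique number of G. Then Tr_st(G) ≥ ω(G). -/
/-!
List a maximum clique as `v₀, v₁, …, v_{ω-1}` by non-increasing degree. The parts
`{v₀} ∪ (V \ K), {v₁}, …, {v_{ω-1}}` form a strong transitive partition: a later part is a
single clique vertex `v_j`, and each earlier `v_i` is adjacent to it with degree at least its own.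
-/

namespace StrongTrans

variable {V : Type*}

def IsIndepSet (G : SimpleGraph V) (S : Set V) : Prop :=
  S.Pairwise fun a b => ¬ G.Adj a b

section

variable {G : SimpleGraph V}

lemma bddAbove_strongTransitivity [Finite V] (G : SimpleGraph V) :
    BddAbove {k | ∃ P : Fin k → Set V, IsStrongTransitivePartition G P} := by
  refine ⟨Nat.card V, fun k ⟨P, hP⟩ => ?_⟩
  choose x hx using hP.nonempty
  have hx_inj : Function.Injective x := fun i j hij => by
    by_contra hne
    exact Set.disjoint_left.mp (hP.pairwiseDisjoint i j hne) (hx i) (hij ▸ hx j)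
  simpa using Nat.card_le_card_of_injective x hx_inj

lemma IsStrongTransitivePartition.le_strongTransitivity [Finite V] {k : ℕ}
    {P : Fin k → Set V} (hP : IsStrongTransitivePartition G P) : k ≤ strongTransitivity G :=
  le_csSup (bddAbove_strongTransitivity G) ⟨P, hP⟩

lemma isStrongTransitivePartition_fibers {k : ℕ} {c : V → Fin k} (hc : Function.Surjective c)
    (hdom : ∀ i j, i < j → StronglyDominates G (c ⁻¹' {i}) (c ⁻¹' {j})) :
    IsStrongTransitivePartition G fun i => c ⁻¹' {i} where
  nonempty i := hc i
  pairwiseDisjoint _ _ hij := Set.disjoint_singleton.mpr hij |>.preimage c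
  covers v := ⟨c v, rfl⟩
  stronglyDominates := hdom

lemma exists_equiv_fin_antitone_comp {ι α : Type*} [Fintype ι] [LinearOrder α] (f : ι → α) :
    ∃ e : Fin (Fintype.card ι) ≃ ι, Antitone (f ∘ e) := by
  let w := (Fintype.equivFin ι).symm
  exact ⟨(Tuple.sort (OrderDual.toDual ∘ f ∘ w)).trans w,
    fun _ _ hij => Tuple.monotone_sort (OrderDual.toDual ∘ f ∘ w) hij⟩

/-- The colouring `Function.extend e id 0` sends `e i` to `i` and every vertex outside the
clique to `0`. -/
lemma isStrongTransitivePartition_of_isClique {k : ℕ} [NeZero k] (e : Fin k ↪ V)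
    (he : G.IsClique (Set.range e)) (hdeg : Antitone (deg G ∘ e)) :
    IsStrongTransitivePartition G fun i => Function.extend e id (fun _ => 0) ⁻¹' {i} := by
  set c : V → Fin k := Function.extend e id (fun _ => 0)
  have hce (i : Fin k) : c (e i) = i := e.injective.extend_apply _ _ i
  refine isStrongTransitivePartition_fibers (fun i => ⟨e i, hce i⟩) fun i j hij y hy => ?_
  obtain ⟨a, rfl⟩ : y ∈ Set.range e := by
    by_contra hy_out
    have : c y = 0 := Function.extend_apply' _ _ y hy_out
    exact (Fin.zero_le i).not_gt (hij.trans_eq (hy.symm.trans this))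
  obtain rfl : a = j := (hce a).symm.trans hy
  exact ⟨e i, hce i, he ⟨i, rfl⟩ ⟨a, rfl⟩ (e.injective.ne hij.ne), hdeg hij.le⟩

lemma card_le_strongTransitivity_of_isClique [Finite V] {s : Finset V}
    (hs : G.IsClique (s : Set V)) :
    s.card ≤ strongTransitivity G := by
  rcases s.eq_empty_or_nonempty with rfl | hne
  · exact Nat.zero_le _
  obtain ⟨e, he⟩ := exists_equiv_fin_antitone_comp (deg G ∘ ((↑) : s → V))
  rw [← Fintype.card_coe s]
  have : Nonempty s := hne.to_subtype
  have : NeZero (Fintype.card s) := ⟨Fintype.card_ne_zero⟩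
  refine (isStrongTransitivePartition_of_isClique (e.toEmbedding.trans (.subtype _)) ?_ he)
    |>.le_strongTransitivity
  rwa [Function.Embedding.coe_trans, Set.range_comp, Equiv.coe_toEmbedding, e.range_eq_univ,
    Set.image_univ, Function.Embedding.coe_subtype, Subtype.range_coe]

end

theorem cliqueNum_le_strongTransitivity_of_split_general
    (V : Type*) [Fintype V] (G : SimpleGraph V) (K : Set V)
    (hK : G.IsClique K)
    (hmax : K.ncard = G.cliqueNum) :
    G.cliqueNum ≤ strongTransitivity G := by
  rw [← hmax, Set.ncard_eq_toFinset_card K]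
  exact card_le_strongTransitivity_of_isClique (by rwa [Set.Finite.coe_toFinset])

/-- for a split graph `G = (S ∪ K, E)` with `S` independent, `K` a
clique of maximum size (`|K| = ω(G)`), we have `Tr_st(G) ≥ ω(G)`. -/
theorem cliqueNum_le_strongTransitivity_of_split
    (V : Type*) [Fintype V] (G : SimpleGraph V) (S K : Set V)
    (hdisj : Disjoint S K) (hcover : S ∪ K = Set.univ)
    (hS : IsIndepSet G S) (hK : G.IsClique K)
    (hmax : K.ncard = G.cliqueNum) :
    G.cliqueNum ≤ strongTransitivity G :=
  cliqueNum_le_strongTransitivity_of_split_general V G K hK hmax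

end StrongTrans
end

section
/- Let G be a split graph with vertex set partitioned into an independent set S and a clique K, where K is a maximum clique of G (|K| = ω(G)), and suppose every vertex of K has a neighbor in S. Then G has no strong transitive partition of size ω(G) + 1; equivalently, Tr_st(G) ≤ ω(G). -/
namespace StrongTrans

variable {V : Type*}

section Aux

variable [Fintype V] {G : SimpleGraph V} {S K : Set V}

lemma deg_eq_ncard (G : SimpleGraph V) (v : V) :
    deg G v = (G.neighborSet v).ncard := Nat.card_coe_set_eq _

/-- Every vertex of the independent side `S` has degree `< ω(G)`. -/
lemma deg_lt_of_mem_S (hdisj : Disjoint S K) (hS : IsIndepSet G S) (hK : G.IsClique K)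
    (hmax : K.ncard = G.cliqueNum) {s : V} (hsS : s ∈ S)
    (hcover : S ∪ K = Set.univ) : deg G s < G.cliqueNum := by
  classical
  have hnsub : G.neighborSet s ⊆ K := by
    intro w hw
    have hw' : G.Adj s w := hw
    have : w ∈ S ∪ K := hcover ▸ Set.mem_univ w
    rcases this with h | h
    · exact absurd hw' (hS hsS h hw'.ne)
    · exact h
  have hfin : K.Finite := Set.toFinite K
  have hle : deg G s ≤ K.ncard := by
    rw [deg_eq_ncard]; exact Set.ncard_le_ncard hnsub hfin
  rcases lt_or_eq_of_le hle with h | h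
  · omega
  · -- `deg s = |K|` : then `neighborSet s = K`, and `insert s K` is a clique of size `ω + 1`
    exfalso
    have heq : G.neighborSet s = K := by
      apply Set.eq_of_subset_of_ncard_le hnsub
      rw [← deg_eq_ncard, h]
    have hsK : s ∉ K := fun h' => (hdisj.ne_of_mem hsS h') rfl
    have hclique : G.IsClique (insert s K) := by
      intro a ha b hb hab
      rcases ha with rfl | ha
      · rcases hb with rfl | hb
        · exact absurd rfl hab
        · have : b ∈ G.neighborSet a := heq ▸ hb
          exact this
      · rcases hb with rfl | hb
        · have : a ∈ G.neighborSet b := heq ▸ ha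
          exact this.symm
        · exact hK ha hb hab
    have hcard : (insert s K).ncard = K.ncard + 1 :=
      Set.ncard_insert_of_notMem hsK hfin
    have hle2 : (insert s K).ncard ≤ G.cliqueNum := by
      have h1 : G.IsClique ((insert s K).toFinite.toFinset : Finset V) := by
        rwa [Set.Finite.coe_toFinset]
      have := @SimpleGraph.IsClique.card_le_cliqueNum V G _ _ h1
      rwa [← Set.ncard_eq_toFinset_card] at this
    omega

/-- The key counting lemma: any strong transitive partition has size at most `ω(G)`. -/
lemma size_le (hdisj : Disjoint S K) (hcover : S ∪ K = Set.univ)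
    (hS : IsIndepSet G S) (hK : G.IsClique K)
    (hmax : K.ncard = G.cliqueNum)
    {k : ℕ} {P : Fin k → Set V} (hP : IsStrongTransitivePartition G P) :
    k ≤ G.cliqueNum := by
  classical
  by_contra hlt
  push_neg at hlt
  obtain ⟨m, rfl⟩ : ∃ m, k = m + 1 := ⟨k - 1, by omega⟩
  obtain ⟨y, hy⟩ := hP.nonempty (Fin.last m)
  -- choose, for each `i : Fin m`, a strong dominator `x i ∈ P i.castSucc` of `y`
  have hx : ∀ i : Fin m, ∃ x ∈ P i.castSucc, G.Adj x y ∧ deg G y ≤ deg G x := by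
    intro i
    exact hP.stronglyDominates i.castSucc (Fin.last m) (Fin.castSucc_lt_last i) y hy
  choose x hxP hxadj hxdeg using hx
  -- `x` is injective and `x i ≠ y` (the parts are disjoint)
  have hxinj : Function.Injective x := by
    intro i j hij
    by_contra hne
    have hne' : i.castSucc ≠ j.castSucc := by simpa using hne
    exact Set.disjoint_left.1 (hP.pairwiseDisjoint _ _ hne') (hxP i) (hij ▸ hxP j)
  have hxy : ∀ i, x i ≠ y := by
    intro i h
    exact Set.disjoint_left.1
      (hP.pairwiseDisjoint i.castSucc (Fin.last m) (Fin.castSucc_lt_last i).ne)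
      (hxP i) (h ▸ hy)
  -- hence `deg y ≥ m`
  have hdegy : m ≤ deg G y := by
    have : Function.Injective
        (fun i : Fin m => (⟨x i, (hxadj i).symm⟩ : {w // G.Adj y w})) := by
      intro i j h
      exact hxinj (congrArg Subtype.val h)
    have := Nat.card_le_card_of_injective _ this
    simpa [deg] using this
  have hωm : G.cliqueNum ≤ m := by omega
  have hdegy' : G.cliqueNum ≤ deg G y := le_trans hωm hdegy
  -- any vertex of degree `≥ ω` must be in `K`
  have hmemK : ∀ v : V, G.cliqueNum ≤ deg G v → v ∈ K := by
    intro v hv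
    have : v ∈ S ∪ K := hcover ▸ Set.mem_univ v
    rcases this with h | h
    · exact absurd hv (not_le.2 (deg_lt_of_mem_S hdisj hS hK hmax h hcover))
    · exact h
  have hyK : y ∈ K := hmemK y hdegy'
  have hxK : ∀ i, x i ∈ K := fun i => hmemK (x i) (le_trans hdegy' (hxdeg i))
  -- build an injective map `Fin (m + 1) → K`, contradicting `|K| = ω ≤ m`
  have hinj : Function.Injective (fun i : Fin (m + 1) =>
      (⟨if h : i = Fin.last m then y else x (i.castPred h),
        by split <;> [exact hyK; exact hxK _]⟩ : K)) := by
    intro i j h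
    have h' := congrArg Subtype.val h
    simp only at h'
    by_cases hi : i = Fin.last m
    · by_cases hj : j = Fin.last m
      · rw [hi, hj]
      · rw [dif_pos hi, dif_neg hj] at h'
        exact absurd h'.symm (hxy _)
    · by_cases hj : j = Fin.last m
      · rw [dif_neg hi, dif_pos hj] at h'
        exact absurd h' (hxy _)
      · rw [dif_neg hi, dif_neg hj] at h'
        have h2 := congrArg Fin.castSucc (hxinj h')
        rwa [Fin.castSucc_castPred, Fin.castSucc_castPred] at h2
  have hcard : m + 1 ≤ K.ncard := by
    have := Nat.card_le_card_of_injective _ hinj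
    rwa [Nat.card_eq_fintype_card, Fintype.card_fin, Nat.card_coe_set_eq] at this
  omega

end Aux

/-- in a split graph `G = (S ∪ K, E)` where `K` is a maximum clique
and every vertex of `K` has a neighbour in `S`, `G` has no strong transitive
partition of size `ω(G) + 1`; equivalently `Tr_st(G) ≤ ω(G)`. -/
theorem strongTransitivity_le_cliqueNum_of_split
    (V : Type*) [Fintype V] (G : SimpleGraph V) (S K : Set V)
    (hdisj : Disjoint S K) (hcover : S ∪ K = Set.univ)
    (hS : IsIndepSet G S) (hK : G.IsClique K)
    (hmax : K.ncard = G.cliqueNum)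
    (hnbr : ∀ x ∈ K, ∃ s ∈ S, G.Adj x s) :
    (¬ ∃ P : Fin (G.cliqueNum + 1) → Set V, IsStrongTransitivePartition G P) ∧
    strongTransitivity G ≤ G.cliqueNum := by
  constructor
  · rintro ⟨P, hP⟩
    have := size_le hdisj hcover hS hK hmax hP
    omega
  · refine csSup_le' ?_
    rintro k ⟨P, hP⟩
    exact size_le hdisj hcover hS hK hmax hP

end StrongTrans
end

section
/- Let G be a split graph whose vertex set is partitioned into an independent set S and a clique K, and assume K is a maximum clique of G, i.e., |K| = ω(G). Then the strong transitivity of G equals the clique number of G: Tr_st(G) = ω(G). -/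
/-
Sorting a maximum clique `K` by decreasing degree, with everything outside `K` thrown into the
first part, gives a strong transitive partition with `ω` parts; this works in any finite graph.
Conversely, a vertex `y` in part number `ω + 1` has `ω` neighbours `x_i`, one in each earlier
part, with `deg x_i ≥ deg y`. They cannot all lie in `K`, since together with `y` they would form
a clique of size `ω + 1`. If some `x_i` lies in `S`, then `y ∈ K` has a neighbour outside `K`,
so `deg x_i ≥ deg y ≥ |K|`; but a vertex of `S` of degree `≥ |K|` is adjacent to all of `K`,
which again extends the maximum clique.
-/

namespace StrongTrans

variable {V : Type*}

variable {G : SimpleGraph V}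

lemma deg_eq_ncard_neighborSet (v : V) : deg G v = (G.neighborSet v).ncard :=
  Nat.card_coe_set_eq _

lemma _root_.SimpleGraph.IsClique.ncard_le_cliqueNum [Finite V] {s : Set V}
    (hs : G.IsClique s) : s.ncard ≤ G.cliqueNum := by
  rw [Set.ncard_eq_toFinset_card s]
  exact SimpleGraph.IsClique.card_le_cliqueNum (tc := by simpa using hs)

lemma _root_.SimpleGraph.IsClique.ncard_le_deg_of_adj_notMem [Finite V] {K : Set V} (hK : G.IsClique K) {y z : V} (hy : y ∈ K) (hz : z ∉ K) (hyz : G.Adj y z) :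
    K.ncard ≤ deg G y := by
  have hsub : insert z (K \ {y}) ⊆ G.neighborSet y := by
    rintro w (rfl | ⟨hwK, hwy⟩)
    · exact hyz
    · exact hK hy hwK (Ne.symm hwy)
  rw [deg_eq_ncard_neighborSet, ← Set.ncard_exchange hz hy]
  exact Set.ncard_le_ncard hsub

lemma not_subset_neighborSet_of_ncard_eq_cliqueNum [Finite V] {K : Set V}
    (hK : G.IsClique K) (hmax : K.ncard = G.cliqueNum) {x : V} (hx : x ∉ K) :
    ¬ K ⊆ G.neighborSet x := by
  intro hsub
  have hclique : G.IsClique (insert x K) := hK.insert fun y hy _ => hsub hy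
  have := hclique.ncard_le_cliqueNum
  rw [Set.ncard_insert_of_notMem hx] at this
  omega

namespace IsStrongTransitivePartition

variable {k : ℕ} {P : Fin k → Set V}

lemma exists_strong_neighbors (hP : IsStrongTransitivePartition G P) {j : Fin k} {y : V}
    (hy : y ∈ P j) : ∃ x : Fin j → V, Function.Injective x ∧
      ∀ i, G.Adj (x i) y ∧ deg G y ≤ deg G (x i) := by
  have hx : ∀ i : Fin j, ∃ x ∈ P (Fin.castLT i (i.2.trans j.2)), G.Adj x y ∧ deg G y ≤ deg G x :=
    fun i => hP.stronglyDominates _ _ i.2 y hy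
  choose x hxP hx using hx
  refine ⟨x, fun i i' h => ?_, hx⟩
  by_contra hne
  refine Set.disjoint_left.mp (hP.pairwiseDisjoint _ _ ?_) (hxP i) (h ▸ hxP i')
  simpa [Fin.ext_iff] using hne

lemma le_card (hP : IsStrongTransitivePartition G P) [Finite V] : k ≤ Nat.card V := by
  choose r hr using hP.nonempty
  have hinj : Function.Injective r := fun i j h => by
    by_contra hij
    exact Set.disjoint_left.mp (hP.pairwiseDisjoint i j hij) (hr i) (h ▸ hr j)
  simpa using Nat.card_le_card_of_injective r hinj

end IsStrongTransitivePartition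

lemma _root_.Set.Finite.exists_antitone_enum {α β : Type*} [LinearOrder β] {s : Set α}
    (hs : s.Finite) (f : α → β) :
    ∃ v : Fin s.ncard → α, Function.Injective v ∧ Set.range v = s ∧ Antitone (f ∘ v) := by
  have : Finite s := hs.to_subtype
  let e : Fin s.ncard ≃ s := (Finite.equivFinOfCardEq (Nat.card_coe_set_eq s)).symm
  let g : Fin s.ncard → βᵒᵈ := fun i => OrderDual.toDual (f (e i))
  refine ⟨fun i => e (Tuple.sort g i), Subtype.val_injective.comp
    (e.injective.comp (Tuple.sort g).injective), ?_, fun a b hab => Tuple.monotone_sort g hab⟩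
  ext a
  refine ⟨?_, fun ha => ⟨(Tuple.sort g).symm (e.symm ⟨a, ha⟩), by simp⟩⟩
  rintro ⟨i, rfl⟩
  exact (e _).2

lemma isStrongTransitivePartition_of_isClique_range {m : ℕ} [NeZero m] {v : Fin m → V}
    (hinj : Function.Injective v) (hv : G.IsClique (Set.range v)) (hdeg : Antitone (deg G ∘ v)) :
    IsStrongTransitivePartition G fun i => {u | u = v i ∨ (i = 0 ∧ u ∉ Set.range v)} where
  nonempty i := ⟨v i, Or.inl rfl⟩
  pairwiseDisjoint i j hij := by
    rw [Set.disjoint_left]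
    rintro u (rfl | ⟨rfl, hu⟩) (h | ⟨rfl, hu'⟩)
    · exact hij (hinj h)
    · exact hu' ⟨i, rfl⟩
    · exact hu ⟨j, h.symm⟩
    · exact hij rfl
  covers u := by
    by_cases hu : u ∈ Set.range v
    · obtain ⟨i, rfl⟩ := hu
      exact ⟨i, Or.inl rfl⟩
    · exact ⟨0, Or.inr ⟨rfl, hu⟩⟩
  stronglyDominates i j hij := by
    rintro y (rfl | ⟨rfl, -⟩)
    · exact ⟨v i, Or.inl rfl, hv ⟨i, rfl⟩ ⟨j, rfl⟩ (hinj.ne hij.ne), hdeg hij.le⟩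
    · exact absurd hij (Fin.not_lt_zero i)

lemma _root_.SimpleGraph.IsClique.ncard_le_strongTransitivity [Finite V] {K : Set V}
    (hK : G.IsClique K) : K.ncard ≤ strongTransitivity G := by
  obtain ⟨v, hinj, hrange, hdeg⟩ := K.toFinite.exists_antitone_enum (deg G)
  rcases Nat.eq_zero_or_pos K.ncard with h0 | hpos
  · simp [h0]
  have : NeZero K.ncard := ⟨hpos.ne'⟩
  exact le_csSup ⟨Nat.card V, fun k ⟨P, hP⟩ => hP.le_card⟩
    ⟨_, isStrongTransitivePartition_of_isClique_range hinj (hrange.symm ▸ hK) hdeg⟩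

section Split

variable {S K : Set V}

lemma mem_of_adj_of_mem_indepSet (hcover : S ∪ K = Set.univ) (hS : IsIndepSet G S) {x w : V}
    (hx : x ∈ S) (hxw : G.Adj x w) : w ∈ K :=
  (Set.eq_univ_iff_forall.mp hcover w).resolve_left fun hw => hS hx hw hxw.ne hxw

lemma deg_lt_ncard_of_mem_indepSet [Finite V] (hdisj : Disjoint S K) (hcover : S ∪ K = Set.univ)
    (hS : IsIndepSet G S) (hK : G.IsClique K) (hmax : K.ncard = G.cliqueNum) {x : V} (hx : x ∈ S) : deg G x < K.ncard := by
  by_contra! hge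
  have hsub : G.neighborSet x ⊆ K := fun _ => mem_of_adj_of_mem_indepSet hcover hS hx
  have heq : G.neighborSet x = K :=
    Set.eq_of_subset_of_ncard_le hsub (deg_eq_ncard_neighborSet x ▸ hge)
  exact not_subset_neighborSet_of_ncard_eq_cliqueNum hK hmax (Set.disjoint_left.mp hdisj hx) heq.ge

lemma IsStrongTransitivePartition.le_ncard_of_split [Finite V] (hdisj : Disjoint S K)
    (hcover : S ∪ K = Set.univ) (hS : IsIndepSet G S) (hK : G.IsClique K)
    (hmax : K.ncard = G.cliqueNum) {k : ℕ} {P : Fin k → Set V}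
    (hP : IsStrongTransitivePartition G P) : k ≤ K.ncard := by
  by_contra! hk
  obtain ⟨y, hy⟩ := hP.nonempty ⟨K.ncard, hk⟩
  obtain ⟨x, hxinj, hx⟩ := hP.exists_strong_neighbors hy
  by_cases hxK : ∀ i, x i ∈ K
  · have hclique : G.IsClique (insert y (Set.range x)) := by
      refine SimpleGraph.IsClique.insert ?_ ?_
      · rintro _ ⟨i, rfl⟩ _ ⟨j, rfl⟩ hij
        exact hK (hxK i) (hxK j) hij
      · rintro _ ⟨i, rfl⟩ -
        exact (hx i).1.symm
    have hy' : y ∉ Set.range x := by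
      rintro ⟨i, rfl⟩
      exact (hx i).1.ne rfl
    have := hclique.ncard_le_cliqueNum
    rw [Set.ncard_insert_of_notMem hy', Set.ncard_range_of_injective hxinj, Nat.card_fin,
      Fin.val_mk] at this
    omega
  · obtain ⟨i, hi⟩ := not_forall.mp hxK
    have hxS : x i ∈ S := (Set.eq_univ_iff_forall.mp hcover (x i)).resolve_right hi
    have hyK := mem_of_adj_of_mem_indepSet hcover hS hxS (hx i).1
    have hdeg_y : K.ncard ≤ deg G y := hK.ncard_le_deg_of_adj_notMem hyK hi (hx i).1.symm
    exact (deg_lt_ncard_of_mem_indepSet hdisj hcover hS hK hmax hxS).not_ge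
      (hdeg_y.trans (hx i).2)

end Split

/-- for a split graph `G = (S ∪ K, E)` with `S` independent and `K`
a maximum clique (`|K| = ω(G)`), the strong transitivity equals the clique
number: `Tr_st(G) = ω(G)`. -/
theorem strongTransitivity_eq_cliqueNum_of_split
    (V : Type*) [Fintype V] (G : SimpleGraph V) (S K : Set V)
    (hdisj : Disjoint S K) (hcover : S ∪ K = Set.univ)
    (hS : IsIndepSet G S) (hK : G.IsClique K)
    (hmax : K.ncard = G.cliqueNum) :
    strongTransitivity G = G.cliqueNum := by
  rw [← hmax]
  refine le_antisymm (csSup_le' fun k ⟨P, hP⟩ => ?_) hK.ncard_le_strongTransitivity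
  exact hP.le_ncard_of_split hdisj hcover hS hK hmax

end StrongTrans
end

section
/- The strong transitivity of a disjoint union of two graphs is the maximum of the strong transitivities of the two graphs: for finite simple graphs G and H on disjoint vertex sets, Tr_st(G ⊕ H) = max(Tr_st(G), Tr_st(H)), where G ⊕ H denotes the disjoint union of G and H. -/
namespace StrongTrans

variable {V : Type*}

section Aux

variable {α β : Type*} {G : SimpleGraph α} {H : SimpleGraph β}

lemma deg_sum_inl (v : α) : deg (G.sum H) (Sum.inl v) = deg G v := by
  unfold deg
  refine (Nat.card_congr (Equiv.ofBijective
    (fun w : {w // G.Adj v w} => (⟨Sum.inl w.1, by simpa using w.2⟩ :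
      {w // (G.sum H).Adj (Sum.inl v) w})) ⟨?_, ?_⟩)).symm
  · rintro ⟨a, ha⟩ ⟨b, hb⟩ h
    simpa using h
  · rintro ⟨u, h⟩
    cases u with
    | inl u => exact ⟨⟨u, by simpa using h⟩, rfl⟩
    | inr u => simp at h

lemma deg_sum_inr (w : β) : deg (G.sum H) (Sum.inr w) = deg H w := by
  unfold deg
  refine (Nat.card_congr (Equiv.ofBijective
    (fun x : {x // H.Adj w x} => (⟨Sum.inr x.1, by simpa using x.2⟩ :
      {x // (G.sum H).Adj (Sum.inr w) x})) ⟨?_, ?_⟩)).symm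
  · rintro ⟨a, ha⟩ ⟨b, hb⟩ h
    simpa using h
  · rintro ⟨u, h⟩
    cases u with
    | inl u => simp at h
    | inr u => exact ⟨⟨u, by simpa using h⟩, rfl⟩

lemma mem_bdd [Fintype α] {k : ℕ} {P : Fin k → Set α}
    (hP : IsStrongTransitivePartition G P) : k ≤ Fintype.card α := by
  classical
  choose f hf using hP.nonempty
  have hinj : Function.Injective f := by
    intro i j hij
    by_contra hne
    exact (hP.pairwiseDisjoint i j hne).ne_of_mem (hf i) (hf j) (by rw [hij])
  simpa using Fintype.card_le_of_injective f hinj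

lemma bddAbove_S [Fintype α] (G : SimpleGraph α) :
    BddAbove {k | ∃ P : Fin k → Set α, IsStrongTransitivePartition G P} := by
  refine ⟨Fintype.card α, ?_⟩
  rintro k ⟨P, hP⟩
  exact mem_bdd hP

-- transfer a partition of G to one of G.sum H (k ≥ 1)
lemma sum_of_left {k : ℕ} (hk : 0 < k) {P : Fin k → Set α}
    (hP : IsStrongTransitivePartition G P) :
    ∃ Q : Fin k → Set (α ⊕ β), IsStrongTransitivePartition (G.sum H) Q := by
  classical
  refine ⟨fun i => Sum.inl '' P i ∪ (if i = ⟨0, hk⟩ then Set.range Sum.inr else ∅), ?_, ?_, ?_, ?_⟩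
  · intro i
    obtain ⟨v, hv⟩ := hP.nonempty i
    exact ⟨Sum.inl v, Or.inl ⟨v, hv, rfl⟩⟩
  · intro i j hij
    have h1 : Disjoint (Sum.inl '' P i : Set (α ⊕ β)) (Sum.inl '' P j) :=
      (Set.disjoint_image_iff Sum.inl_injective).2 (hP.pairwiseDisjoint i j hij)
    rw [Set.disjoint_union_left]
    constructor
    · rw [Set.disjoint_union_right]
      refine ⟨h1, ?_⟩
      split
      · rw [Set.disjoint_right]; rintro _ ⟨w, rfl⟩ ⟨v, _, h⟩; simp at h
      · exact Set.disjoint_empty _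
    · split
      · rw [Set.disjoint_union_right]
        constructor
        · rw [Set.disjoint_left]; rintro _ ⟨w, rfl⟩ ⟨v, _, h⟩; simp at h
        · split
          · rename_i h1 h2; exact absurd (h1.trans h2.symm) hij
          · exact Set.disjoint_empty _
      · exact (Set.empty_disjoint _)
  · rintro (v | w)
    · obtain ⟨i, hi⟩ := hP.covers v
      exact ⟨i, Or.inl ⟨v, hi, rfl⟩⟩
    · exact ⟨⟨0, hk⟩, Or.inr (by simp)⟩
  · intro i j hij y hy
    have hj0 : j ≠ ⟨0, hk⟩ := by
      intro h; subst h; exact absurd hij (by simp [Fin.lt_def])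
    rw [if_neg hj0] at hy
    simp only [Set.union_empty] at hy
    obtain ⟨v, hv, rfl⟩ := hy
    obtain ⟨x, hx, hadj, hdeg⟩ := hP.stronglyDominates i j hij v hv
    refine ⟨Sum.inl x, Or.inl ⟨x, hx, rfl⟩, by simpa using hadj, ?_⟩
    rwa [deg_sum_inl, deg_sum_inl]

lemma sum_of_right {k : ℕ} (hk : 0 < k) {P : Fin k → Set β}
    (hP : IsStrongTransitivePartition H P) :
    ∃ Q : Fin k → Set (α ⊕ β), IsStrongTransitivePartition (G.sum H) Q := by
  classical
  refine ⟨fun i => Sum.inr '' P i ∪ (if i = ⟨0, hk⟩ then Set.range Sum.inl else ∅), ?_, ?_, ?_, ?_⟩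
  · intro i
    obtain ⟨v, hv⟩ := hP.nonempty i
    exact ⟨Sum.inr v, Or.inl ⟨v, hv, rfl⟩⟩
  · intro i j hij
    have h1 : Disjoint (Sum.inr '' P i : Set (α ⊕ β)) (Sum.inr '' P j) :=
      (Set.disjoint_image_iff Sum.inr_injective).2 (hP.pairwiseDisjoint i j hij)
    rw [Set.disjoint_union_left]
    constructor
    · rw [Set.disjoint_union_right]
      refine ⟨h1, ?_⟩
      split
      · rw [Set.disjoint_right]; rintro _ ⟨w, rfl⟩ ⟨v, _, h⟩; simp at h
      · exact Set.disjoint_empty _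
    · split
      · rw [Set.disjoint_union_right]
        constructor
        · rw [Set.disjoint_left]; rintro _ ⟨w, rfl⟩ ⟨v, _, h⟩; simp at h
        · split
          · rename_i h1 h2; exact absurd (h1.trans h2.symm) hij
          · exact Set.disjoint_empty _
      · exact (Set.empty_disjoint _)
  · rintro (v | w)
    · exact ⟨⟨0, hk⟩, Or.inr (by simp)⟩
    · obtain ⟨i, hi⟩ := hP.covers w
      exact ⟨i, Or.inl ⟨w, hi, rfl⟩⟩
  · intro i j hij y hy
    have hj0 : j ≠ ⟨0, hk⟩ := by
      intro h; subst h; exact absurd hij (by simp [Fin.lt_def])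
    rw [if_neg hj0] at hy
    simp only [Set.union_empty] at hy
    obtain ⟨v, hv, rfl⟩ := hy
    obtain ⟨x, hx, hadj, hdeg⟩ := hP.stronglyDominates i j hij v hv
    refine ⟨Sum.inr x, Or.inl ⟨x, hx, rfl⟩, by simpa using hadj, ?_⟩
    rwa [deg_sum_inr, deg_sum_inr]

-- extract from a partition of the sum whose last part meets the left side
lemma left_of_sum {k : ℕ} (hk : 0 < k) {Q : Fin k → Set (α ⊕ β)}
    (hQ : IsStrongTransitivePartition (G.sum H) Q) {v : α}
    (hv : Sum.inl v ∈ Q ⟨k - 1, by omega⟩) :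
    ∃ P : Fin k → Set α, IsStrongTransitivePartition G P := by
  set last : Fin k := ⟨k - 1, by omega⟩ with hlast
  refine ⟨fun i => Sum.inl ⁻¹' Q i, ?_, ?_, ?_, ?_⟩
  · intro i
    rcases eq_or_ne i last with rfl | hne
    · exact ⟨v, hv⟩
    · have hilt : i < last := by
        rw [Fin.lt_def]
        have := i.isLt
        have := Fin.val_ne_of_ne hne
        simp only [hlast] at *
        omega
      obtain ⟨x, hx, hadj, _⟩ := hQ.stronglyDominates i last hilt (Sum.inl v) hv
      cases x with
      | inl x => exact ⟨x, hx⟩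
      | inr x => simp at hadj
  · intro i j hij
    exact (hQ.pairwiseDisjoint i j hij).preimage _
  · intro w
    obtain ⟨i, hi⟩ := hQ.covers (Sum.inl w)
    exact ⟨i, hi⟩
  · intro i j hij y hy
    obtain ⟨x, hx, hadj, hdeg⟩ := hQ.stronglyDominates i j hij (Sum.inl y) hy
    cases x with
    | inl x =>
      refine ⟨x, hx, by simpa using hadj, ?_⟩
      rwa [deg_sum_inl, deg_sum_inl] at hdeg
    | inr x => simp at hadj

lemma right_of_sum {k : ℕ} (hk : 0 < k) {Q : Fin k → Set (α ⊕ β)}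
    (hQ : IsStrongTransitivePartition (G.sum H) Q) {v : β}
    (hv : Sum.inr v ∈ Q ⟨k - 1, by omega⟩) :
    ∃ P : Fin k → Set β, IsStrongTransitivePartition H P := by
  set last : Fin k := ⟨k - 1, by omega⟩ with hlast
  refine ⟨fun i => Sum.inr ⁻¹' Q i, ?_, ?_, ?_, ?_⟩
  · intro i
    rcases eq_or_ne i last with rfl | hne
    · exact ⟨v, hv⟩
    · have hilt : i < last := by
        rw [Fin.lt_def]
        have := i.isLt
        have := Fin.val_ne_of_ne hne
        simp only [hlast] at *
        omega
      obtain ⟨x, hx, hadj, _⟩ := hQ.stronglyDominates i last hilt (Sum.inr v) hv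
      cases x with
      | inl x => simp at hadj
      | inr x => exact ⟨x, hx⟩
  · intro i j hij
    exact (hQ.pairwiseDisjoint i j hij).preimage _
  · intro w
    obtain ⟨i, hi⟩ := hQ.covers (Sum.inr w)
    exact ⟨i, hi⟩
  · intro i j hij y hy
    obtain ⟨x, hx, hadj, hdeg⟩ := hQ.stronglyDominates i j hij (Sum.inr y) hy
    cases x with
    | inl x => simp at hadj
    | inr x =>
      refine ⟨x, hx, by simpa using hadj, ?_⟩
      rwa [deg_sum_inr, deg_sum_inr] at hdeg

end Aux


/-- the strong transitivity of a disjoint union of two graphs is the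
maximum of their strong transitivities: `Tr_st(G ⊕ H) = max (Tr_st G) (Tr_st H)`. -/
theorem strongTransitivity_sum
    (V W : Type*) [Fintype V] [Fintype W]
    (G : SimpleGraph V) (H : SimpleGraph W) :
    strongTransitivity (G.sum H) = max (strongTransitivity G) (strongTransitivity H) := by
  classical
  apply le_antisymm
  · rcases Nat.eq_zero_or_pos (strongTransitivity (G.sum H)) with h0 | hpos
    · rw [h0]; exact Nat.zero_le _
    · have hne : {k | ∃ P : Fin k → Set (V ⊕ W),
          IsStrongTransitivePartition (G.sum H) P}.Nonempty := by
        rw [Set.nonempty_iff_ne_empty]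
        intro h
        rw [strongTransitivity, h, csSup_empty] at hpos
        simp at hpos
      have hmem : strongTransitivity (G.sum H) ∈ {k | ∃ P : Fin k → Set (V ⊕ W),
          IsStrongTransitivePartition (G.sum H) P} := Nat.sSup_mem hne (bddAbove_S _)
      obtain ⟨Q, hQ⟩ := hmem
      obtain ⟨y, hy⟩ := hQ.nonempty ⟨strongTransitivity (G.sum H) - 1, by omega⟩
      cases y with
      | inl v =>
        obtain ⟨P, hP⟩ := left_of_sum hpos hQ hy
        exact le_max_of_le_left (le_csSup (bddAbove_S G) ⟨P, hP⟩)
      | inr v =>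
        obtain ⟨P, hP⟩ := right_of_sum hpos hQ hy
        exact le_max_of_le_right (le_csSup (bddAbove_S H) ⟨P, hP⟩)
  · rw [max_le_iff]
    constructor
    · rcases Nat.eq_zero_or_pos (strongTransitivity G) with h0 | hpos
      · rw [h0]; exact Nat.zero_le _
      · have hne : {k | ∃ P : Fin k → Set V, IsStrongTransitivePartition G P}.Nonempty := by
          rw [Set.nonempty_iff_ne_empty]
          intro h
          rw [strongTransitivity, h, csSup_empty] at hpos
          simp at hpos
        have hmem : strongTransitivity G ∈ {k | ∃ P : Fin k → Set V,
            IsStrongTransitivePartition G P} := Nat.sSup_mem hne (bddAbove_S G)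
        obtain ⟨P, hP⟩ := hmem
        obtain ⟨Q, hQ⟩ := sum_of_left (H := H) hpos hP
        exact le_csSup (bddAbove_S _) ⟨Q, hQ⟩
    · rcases Nat.eq_zero_or_pos (strongTransitivity H) with h0 | hpos
      · rw [h0]; exact Nat.zero_le _
      · have hne : {k | ∃ P : Fin k → Set W, IsStrongTransitivePartition H P}.Nonempty := by
          rw [Set.nonempty_iff_ne_empty]
          intro h
          rw [strongTransitivity, h, csSup_empty] at hpos
          simp at hpos
        have hmem : strongTransitivity H ∈ {k | ∃ P : Fin k → Set W,
            IsStrongTransitivePartition H P} := Nat.sSup_mem hne (bddAbove_S H)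
        obtain ⟨P, hP⟩ := hmem
        obtain ⟨Q, hQ⟩ := sum_of_right (G := G) hpos hP
        exact le_csSup (bddAbove_S _) ⟨Q, hQ⟩

end StrongTrans
end
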